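/- arXiv:2402.17138 — 3 statements merged into one kernel-verified Lean document; each statement's English description precedes it below -/
import Mathlib

section
/- Let K ≥ 1 be an integer, let φ = (φ_1, …, φ_K) ∈ ℝ^K with φ_k > 0 for all k, and let σ_η², σ_ε² ≥ 0. Define E_p = σ_η² + (∑_{k=1}^K 1/(K φ_k²)) σ_ε² and E_t = ((∑_{k=1}^K φ_k⁴)/(∑_{k=1}^K φ_k²)²) σ_η² + (1/(∑_{k=1}^K φ_k²)) σ_ε². Then E_p − E_t = ς_η(φ) σ_η² + ς_ε(φ) σ_ε², where ς_η(φ) = 2 (∑_{1 ≤ i < j ≤ K} φ_i² φ_j²) / (∑_{k=1}^K φ_k²)² and ς_ε(φ) = (∑_{k=1}^K (∑_{l ≠ k} φ_l²) / (K φ_k²)) / (∑_{k=1}^K φ_k²). -/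
open Finset

lemma sq_sum_eq_aux {K : ℕ} (a : Fin K → ℝ) :
    (∑ k, a k) ^ 2 = ∑ k, a k ^ 2 +
      2 * ∑ i, ∑ j ∈ Finset.univ.filter (fun j => i < j), a i * a j := by
  have hswap : ∑ i, ∑ j ∈ Finset.univ.filter (fun j => i < j), a i * a j
      = ∑ i, ∑ j ∈ Finset.univ.filter (fun j => j < i), a i * a j := by
    rw [Finset.sum_comm' (s' := fun j => Finset.univ.filter (fun i => i < j))
      (t' := Finset.univ)]
    · apply Finset.sum_congr rfl
      intro i _
      apply Finset.sum_congr rfl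
      intro j _
      exact mul_comm _ _
    · intro x y
      simp [and_comm]
  have hsplit : ∀ i : Fin K, (Finset.univ : Finset (Fin K)) =
      {i} ∪ (Finset.univ.filter (fun j => i < j) ∪ Finset.univ.filter (fun j => j < i)) := by
    intro i
    ext j
    simp only [Finset.mem_univ, Finset.mem_union, Finset.mem_singleton, Finset.mem_filter,
      true_and, true_iff]
    rcases lt_trichotomy i j with h | h | h
    · exact Or.inr (Or.inl h)
    · exact Or.inl h.symm
    · exact Or.inr (Or.inr h)
  have key : ∀ i : Fin K, ∑ j, a i * a j = a i * a i
      + (∑ j ∈ Finset.univ.filter (fun j => i < j), a i * a j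
        + ∑ j ∈ Finset.univ.filter (fun j => j < i), a i * a j) := by
    intro i
    conv_lhs => rw [hsplit i]
    rw [Finset.sum_union, Finset.sum_union, Finset.sum_singleton]
    · rw [Finset.disjoint_left]
      intro x hx hx'
      simp only [Finset.mem_filter, Finset.mem_univ, true_and] at hx hx'
      exact absurd hx' (not_lt_of_gt hx)
    · rw [Finset.disjoint_left]
      intro x hx hx'
      simp only [Finset.mem_singleton] at hx
      simp only [Finset.mem_union, Finset.mem_filter, Finset.mem_univ, true_and, hx] at hx'
      exact hx'.elim (fun h => absurd h (lt_irrefl i)) (fun h => absurd h (lt_irrefl i))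
  calc (∑ k, a k) ^ 2 = ∑ i, ∑ j, a i * a j := by
        rw [sq, Finset.sum_mul_sum]
    _ = ∑ i, (a i * a i
        + (∑ j ∈ Finset.univ.filter (fun j => i < j), a i * a j
          + ∑ j ∈ Finset.univ.filter (fun j => j < i), a i * a j)) :=
        Finset.sum_congr rfl fun i _ => key i
    _ = ∑ k, a k ^ 2 + 2 * ∑ i, ∑ j ∈ Finset.univ.filter (fun j => i < j), a i * a j := by
        rw [Finset.sum_add_distrib, Finset.sum_add_distrib, ← hswap]
        have h2 : ∑ i, a i * a i = ∑ k, a k ^ 2 := by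
          refine Finset.sum_congr rfl fun i _ => (pow_two (a i)).symm
        rw [h2]; ring

/-- Proposition 3 (Interpolation error reduction): the difference between the
(topology-normalized) error variance `E_p` of frequency-by-frequency local polynomial
interpolation and the error variance `E_t` of the integrated interpolation and BTD
approach equals `ς_η(φ) σ_η² + ς_ε(φ) σ_ε²`, where
`ς_η(φ) = 2 (∑_{i<j} φ_i² φ_j²)/(∑_k φ_k²)²` and
`ς_ε(φ) = (∑_k (∑_{l≠k} φ_l²)/(K φ_k²))/(∑_k φ_k²)`. -/
theorem interpolation_error_reduction (K : ℕ) (hK : 1 ≤ K)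
    (φ : Fin K → ℝ) (hφ : ∀ k, 0 < φ k) (ση2 σε2 : ℝ) (hη : 0 ≤ ση2) (hε : 0 ≤ σε2)
    (Ep Et : ℝ)
    (hEp : Ep = ση2 + (∑ k, 1 / ((K : ℝ) * φ k ^ 2)) * σε2)
    (hEt : Et = ((∑ k, φ k ^ 4) / (∑ k, φ k ^ 2) ^ 2) * ση2 +
      (1 / (∑ k, φ k ^ 2)) * σε2) :
    Ep - Et =
      (2 * (∑ i, ∑ j ∈ Finset.univ.filter (fun j => i < j), φ i ^ 2 * φ j ^ 2) /
          (∑ k, φ k ^ 2) ^ 2) * ση2 +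
        ((∑ k, (∑ l ∈ Finset.univ.erase k, φ l ^ 2) / ((K : ℝ) * φ k ^ 2)) /
          (∑ k, φ k ^ 2)) * σε2 := by
  have hKpos : (0 : ℝ) < K := by exact_mod_cast hK
  set S : ℝ := ∑ k, φ k ^ 2 with hSdef
  have hS : 0 < S := Finset.sum_pos (fun k _ => pow_pos (hφ k) 2)
    (Finset.univ_nonempty_iff.mpr ⟨⟨0, hK⟩⟩)
  -- η coefficient
  have hsq := sq_sum_eq_aux (fun k => φ k ^ 2)
  simp only [← pow_mul] at hsq
  norm_num at hsq
  have hη_coef : 1 - (∑ k, φ k ^ 4) / S ^ 2 =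
      2 * (∑ i, ∑ j ∈ Finset.univ.filter (fun j => i < j), φ i ^ 2 * φ j ^ 2) / S ^ 2 := by
    rw [eq_div_iff (by positivity), sub_mul, one_mul, div_mul_cancel₀ _ (by positivity)]
    rw [hSdef, hsq]; ring
  -- ε coefficient
  have herase : ∀ k : Fin K, ∑ l ∈ Finset.univ.erase k, φ l ^ 2 = S - φ k ^ 2 := by
    intro k
    rw [hSdef, Finset.sum_erase_eq_sub (Finset.mem_univ k)]
  have hε_coef : (∑ k, 1 / ((K : ℝ) * φ k ^ 2)) - 1 / S =
      (∑ k, (∑ l ∈ Finset.univ.erase k, φ l ^ 2) / ((K : ℝ) * φ k ^ 2)) / S := by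
    have h1 : ∀ k : Fin K, (∑ l ∈ Finset.univ.erase k, φ l ^ 2) / ((K : ℝ) * φ k ^ 2)
        = S * (1 / ((K : ℝ) * φ k ^ 2)) - 1 / K := by
      intro k
      rw [herase k]
      have hk := (hφ k).ne'
      field_simp
    simp only [h1]
    rw [Finset.sum_sub_distrib, ← Finset.mul_sum, Finset.sum_const, Finset.card_univ,
      Fintype.card_fin, nsmul_eq_mul, mul_one_div, div_self hKpos.ne']
    field_simp
  rw [hEp, hEt]
  rw [← hη_coef, ← hε_coef]
  ring
end

section
/- Let K ≥ 1 be an integer and let φ be a power spectrum with φ_k > 0 for all k. Then ς_ε(φ) ≥ (K−1)/K, where ς_ε(φ) = (∑_{k=1}^K (∑_{l ≠ k} φ_l²) / (K φ_k²)) / (∑_{k=1}^K φ_k²); equivalently, (1/K) ∑_{k=1}^K 1/φ_k² − 1/(∑_{k=1}^K φ_k²) ≥ (K−1)/K. The bound is attained when φ = (1, 1, …, 1). -/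
/-!
Since `∑_{l ≠ k} φ_l² = S - φ_k²` with `S = ∑ φ_k²`, the coefficient equals `Q / K - 1 / S`
with `Q = ∑ 1 / φ_k²`. The tangent-line bounds `x² ≥ 2x - 1` and `1 / x² ≥ 3 - 2x` at `x = 1`,
summed under `∑ φ_k = K`, give `S ≥ K` and `Q ≥ K`, hence `Q / K - 1 / S ≥ 1 - 1 / K`.
-/

open Finset

lemma two_mul_sub_one_le_sq (x : ℝ) : 2 * x - 1 ≤ x ^ 2 := by
  nlinarith [sq_nonneg (x - 1)]

lemma three_sub_two_mul_le_one_div_sq {x : ℝ} (hx : 0 < x) : 3 - 2 * x ≤ 1 / x ^ 2 := by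
  rw [le_div_iff₀ (by positivity)]
  nlinarith [mul_nonneg (sq_nonneg (x - 1)) (by linarith : (0 : ℝ) ≤ 2 * x + 1)]

section SumBounds

variable {ι : Type*} (s : Finset ι) {φ : ι → ℝ}

lemma card_le_sum_sq_of_sum_eq_card (hsum : ∑ i ∈ s, φ i = #s) :
    (#s : ℝ) ≤ ∑ i ∈ s, φ i ^ 2 :=
  calc (#s : ℝ) = ∑ i ∈ s, (2 * φ i - 1) := by
        rw [sum_sub_distrib, ← mul_sum, hsum, sum_const, nsmul_one]; ring
    _ ≤ ∑ i ∈ s, φ i ^ 2 := sum_le_sum fun i _ => two_mul_sub_one_le_sq (φ i)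

lemma card_le_sum_one_div_sq_of_sum_eq_card (hφ : ∀ i ∈ s, 0 < φ i)
    (hsum : ∑ i ∈ s, φ i = #s) : (#s : ℝ) ≤ ∑ i ∈ s, 1 / φ i ^ 2 :=
  calc (#s : ℝ) = ∑ i ∈ s, (3 - 2 * φ i) := by
        rw [sum_sub_distrib, ← mul_sum, hsum, sum_const, nsmul_eq_mul]; ring
    _ ≤ ∑ i ∈ s, 1 / φ i ^ 2 :=
        sum_le_sum fun i hi => three_sub_two_mul_le_one_div_sq (hφ i hi)

end SumBounds

lemma sum_sum_erase_sq_div_eq {ι : Type*} [Fintype ι] [DecidableEq ι] [Nonempty ι] {φ : ι → ℝ}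
    (hφ : ∀ i, φ i ≠ 0) :
    (∑ k, (∑ l ∈ univ.erase k, φ l ^ 2) / (Fintype.card ι * φ k ^ 2)) / ∑ k, φ k ^ 2 =
      1 / Fintype.card ι * ∑ k, 1 / φ k ^ 2 - 1 / ∑ k, φ k ^ 2 := by
  set S := ∑ k, φ k ^ 2 with hS_def
  have hS : S ≠ 0 := (sum_pos (fun k _ => pow_two_pos_of_ne_zero (hφ k)) univ_nonempty).ne'
  have hterm : ∀ k, (∑ l ∈ univ.erase k, φ l ^ 2) / (Fintype.card ι * φ k ^ 2) =
      S / Fintype.card ι * (1 / φ k ^ 2) - 1 / Fintype.card ι := fun k => by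
    rw [sum_erase_eq_sub (mem_univ k), ← hS_def]
    field_simp [hφ k]
  simp only [hterm, sum_sub_distrib, ← mul_sum, sum_const, card_univ, nsmul_eq_mul]
  field_simp

/-- Lower bound on the noise error-reduction coefficient of Proposition 3: for any
strictly positive power spectrum `φ`,
`ς_ε(φ) = (∑_k (∑_{l≠k} φ_l²)/(K φ_k²))/(∑_k φ_k²) ≥ (K−1)/K`, equivalently
`(1/K) ∑_k 1/φ_k² − 1/(∑_k φ_k²) ≥ (K−1)/K`; the bound is attained at the uniform
spectrum `(1,…,1)`. -/
theorem noise_reduction_coeff_bound (K : ℕ) (hK : 1 ≤ K)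
    (φ : Fin K → ℝ) (hφ : ∀ k, 0 < φ k) (hsum : ∑ k, φ k = (K : ℝ)) :
    (((K : ℝ) - 1) / K ≤
      (∑ k, (∑ l ∈ Finset.univ.erase k, φ l ^ 2) / ((K : ℝ) * φ k ^ 2)) /
        (∑ k, φ k ^ 2)) ∧
    (((K : ℝ) - 1) / K ≤
      (1 / (K : ℝ)) * (∑ k, 1 / φ k ^ 2) - 1 / (∑ k, φ k ^ 2)) ∧
    ((∑ k : Fin K, (∑ l ∈ Finset.univ.erase k, (1 : ℝ) ^ 2) / ((K : ℝ) * (1 : ℝ) ^ 2)) /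
        (∑ k : Fin K, (1 : ℝ) ^ 2) = ((K : ℝ) - 1) / K) := by
  have : NeZero K := ⟨by omega⟩
  have hsum' : ∑ k, φ k = #(univ : Finset (Fin K)) := by simpa using hsum
  have hS : (K : ℝ) ≤ ∑ k, φ k ^ 2 := by
    simpa using card_le_sum_sq_of_sum_eq_card univ hsum'
  have hQ : (K : ℝ) ≤ ∑ k, 1 / φ k ^ 2 := by
    simpa using card_le_sum_one_div_sq_of_sum_eq_card univ (fun k _ => hφ k) hsum'
  have hbound : ((K : ℝ) - 1) / K ≤ 1 / K * ∑ k, 1 / φ k ^ 2 - 1 / ∑ k, φ k ^ 2 :=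
    calc ((K : ℝ) - 1) / K = 1 / K * K - 1 / K := by field_simp
      _ ≤ _ := by gcongr
  have hcoeff := sum_sum_erase_sq_div_eq (fun k => (hφ k).ne')
  rw [Fintype.card_fin] at hcoeff
  refine ⟨hcoeff ▸ hbound, hbound, ?_⟩
  simp only [one_pow, mul_one, sum_const, card_erase_of_mem (mem_univ _), card_univ,
    Fintype.card_fin, nsmul_eq_mul, Nat.cast_sub hK, Nat.cast_one]
  field_simp
end

section
/- Let K > 0 be a real number and let η ∈ [0, 1). Define ϖ_η(η) = (2 + 10η − 10η² − 2η³) / (K(1 + 2η − 3η²)²). Then ϖ_η(η) ≥ 2/K, with equality if and only if η = 0. -/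
/-- Lower bound on the fading coefficient of Theorem 2 (Spectrum overlap for multiple
sources): for overlapping ratio `η ∈ [0,1)`, the coefficient
`ϖ_η(η) = (2 + 10η − 10η² − 2η³)/(K(1 + 2η − 3η²)²)` satisfies `ϖ_η(η) ≥ 2/K`, with
equality if and only if `η = 0`. -/
theorem fading_coeff_lower_bound (K η : ℝ) (hK : 0 < K) (hη0 : 0 ≤ η) (hη1 : η < 1) :
    2 / K ≤ (2 + 10 * η - 10 * η ^ 2 - 2 * η ^ 3) / (K * (1 + 2 * η - 3 * η ^ 2) ^ 2) ∧
    ((2 + 10 * η - 10 * η ^ 2 - 2 * η ^ 3) / (K * (1 + 2 * η - 3 * η ^ 2) ^ 2) = 2 / K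
      ↔ η = 0) := by
  have hp : 0 < 1 + 2 * η - 3 * η ^ 2 := by nlinarith
  have hd : 0 < K * (1 + 2 * η - 3 * η ^ 2) ^ 2 := by positivity
  have hposf : 0 < (1 - η) * (9 * η ^ 2 - 2 * η + 1) := by nlinarith [sq_nonneg (3 * η - 1)]
  constructor
  · rw [div_le_div_iff₀ hK hd]
    nlinarith [mul_nonneg (mul_nonneg hη0 hposf.le) hK.le]
  · constructor
    · intro h
      rw [div_eq_div_iff hd.ne' hK.ne'] at h
      have h2 : K * (2 * (η * ((1 - η) * (9 * η ^ 2 - 2 * η + 1)))) = 0 := by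
        linear_combination h
      have h3 : η * ((1 - η) * (9 * η ^ 2 - 2 * η + 1)) = 0 := by
        rcases mul_eq_zero.mp h2 with h' | h'
        · exact absurd h' hK.ne'
        · linarith
      rcases mul_eq_zero.mp h3 with h' | h'
      · exact h'
      · exact absurd h' hposf.ne'
    · rintro rfl
      norm_num
end
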